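/- Let ρₙ: Γ → Gₙ be a sequence of discrete faithful weakly type preserving representations of a Kleinian group Γ converging algebraically to ρ_∞. Then the sequence (ρₙ) converges strongly (i.e., also geometrically to ρ_∞(Γ)) if and only if it satisfies UEP: there exists f: ℕ → ℕ with f(N) → ∞ such that for all g ∈ Γ, |g| ≥ N implies d_H(ρₙ(g)·O, O) ≥ f(N) for all n. -/

import Mathlib

open Filter Set
open scoped ENNReal ComplexConjugate MatrixGroups

noncomputable section
open scoped Classical

/-- `SL(2,ℂ)`, acting as (lifts of) orientation preserving isometries of hyperbolic
3-space in the upper half-space model `ℂ × (0,∞) `. -/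
abbrev SL2C := Matrix.SpecialLinearGroup (Fin 2) ℂ

/-- The action of `SL(2,ℂ)` on the upper half-space `{(z,t) : t > 0} ⊆ ℂ × ℝ`
(Poincaré extension of the Möbius action). -/
def uAct (M : SL2C) (p : ℂ × ℝ) : ℂ × ℝ :=
  let a := M.1 0 0; let b := M.1 0 1; let c := M.1 1 0; let d := M.1 1 1
  let D : ℝ := Complex.normSq (c * p.1 + d) + Complex.normSq c * p.2 ^ 2
  (((a * p.1 + b) * conj (c * p.1 + d) + a * conj c * (p.2 ^ 2 : ℝ)) / (D : ℂ), p.2 / D)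

/-- Hyperbolic distance in the upper half-space model. -/
def uDist (p q : ℂ × ℝ) : ℝ :=
  2 * Real.arsinh
    (Real.sqrt (Complex.normSq (p.1 - q.1) + (p.2 - q.2) ^ 2) /
      (2 * Real.sqrt (p.2 * q.2)))

/-- The base point `O = (0,1)` of the upper half-space. -/
def uO : ℂ × ℝ := (0, 1)

/-- Hyperbolic geodesic segment between two points of the upper half-space. -/
def uSeg (x y : ℂ × ℝ) : Set (ℂ × ℝ) :=
  {z | 0 < z.2 ∧ uDist x z + uDist z y = uDist x y}

/-- A parabolic element of `SL(2,ℂ)`: trace `±2` and not `±1`. -/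
def IsParabolicSL (M : SL2C) : Prop :=
  (Matrix.trace M.1) ^ 2 = 4 ∧ M.1 ≠ 1 ∧ M.1 ≠ -1

/-- Discreteness of a subgroup of `SL(2,ℂ)`: every convergent sequence from the
subgroup is eventually constant. -/
def DiscreteSG (G : Subgroup SL2C) : Prop :=
  ∀ u : ℕ → SL2C, (∀ n, u n ∈ G) → ∀ L : SL2C,
    Tendsto (fun n => (u n).1) atTop (nhds L.1) → ∃ N, ∀ n ≥ N, u n = L

/-- Word length with respect to a (symmetrized) generating set `S`. -/
def wordLength {Γ : Type*} [Group Γ] (S : Set Γ) (g : Γ) : ℕ :=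
  sInf {n | ∃ l : List Γ, l.length = n ∧ (∀ x ∈ l, x ∈ S ∨ x⁻¹ ∈ S) ∧ l.prod = g}

/-- Geometric (Chabauty) convergence of a sequence of subsets of `SL(2,ℂ)` to `H`. -/
def GeomLimitSet (Gn : ℕ → Set SL2C) (H : Set SL2C) : Prop :=
  (∀ h ∈ H, ∃ u : ℕ → SL2C, (∀ n, u n ∈ Gn n) ∧
      Tendsto (fun n => (u n).1) atTop (nhds h.1)) ∧
  (∀ φ : ℕ → ℕ, StrictMono φ → ∀ u : ℕ → SL2C, (∀ n, u n ∈ Gn (φ n)) →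
      ∀ L : SL2C, Tendsto (fun n => (u n).1) atTop (nhds L.1) → L ∈ H)

/-- Extract the finite coordinate of a point of the Riemann sphere `OnePoint ℂ`. -/
def ptoC (p : OnePoint ℂ) : ℂ := (show Option ℂ from p).getD 0

/-- The chordal ("Euclidean") metric on the Riemann sphere. -/
def chordal (p q : OnePoint ℂ) : ℝ :=
  if p = OnePoint.infty then (if q = OnePoint.infty then 0 else 2 / Real.sqrt (1 + Complex.normSq (ptoC q)))
  else if q = OnePoint.infty then 2 / Real.sqrt (1 + Complex.normSq (ptoC p))
  else 2 * ‖ptoC p - ptoC q‖ /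
    Real.sqrt ((1 + Complex.normSq (ptoC p)) * (1 + Complex.normSq (ptoC q)))

/-- The Möbius action of `SL(2,ℂ)` on the Riemann sphere. -/
def mobius (M : SL2C) (p : OnePoint ℂ) : OnePoint ℂ :=
  if p = OnePoint.infty then
    (if M.1 1 0 = 0 then OnePoint.infty else ((M.1 0 0 / M.1 1 0 : ℂ) : OnePoint ℂ))
  else
    (if M.1 1 0 * ptoC p + M.1 1 1 = 0 then OnePoint.infty
     else (((M.1 0 0 * ptoC p + M.1 0 1) / (M.1 1 0 * ptoC p + M.1 1 1) : ℂ) : OnePoint ℂ))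

/-- Convergence of a sequence of points of upper half-space to a boundary point of the
Riemann sphere. -/
def convToBdry (u : ℕ → ℂ × ℝ) (ξ : OnePoint ℂ) : Prop :=
  if ξ = OnePoint.infty then Tendsto (fun n => ‖(u n).1‖ + |(u n).2|) atTop atTop
  else Tendsto u atTop (nhds (ptoC ξ, 0))

/-- The limit set of a set of elements of `SL(2,ℂ)`: accumulation points on the sphere
at infinity of the orbit of the base point. -/
def limitSetU (G : Set SL2C) : Set (OnePoint ℂ) :=
  {ξ | ∃ u : ℕ → SL2C, (∀ n, u n ∈ G) ∧ convToBdry (fun n => uAct (u n) uO) ξ}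

/-- Length of a path measured by a distance function, via polygonal approximation. -/
def pathELength {α : Type*} (d : α → α → ℝ) (γ : ℝ → α) (a b : ℝ) : ℝ≥0∞ :=
  ⨆ p : {q : ℕ × (ℕ → ℝ) // Monotone q.2 ∧ q.2 0 = a ∧ q.2 q.1 = b ∧
      ∀ i, q.2 i ∈ Set.Icc a b},
    ∑ i ∈ Finset.range p.1.1, ENNReal.ofReal (d (γ (p.1.2 i)) (γ (p.1.2 (i + 1))))

/-- Intrinsic (induced path) distance inside the set `S`. -/
def intrinsicDist {α : Type*} [TopologicalSpace α] (d : α → α → ℝ) (S : Set α)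
    (x y : α) : ℝ≥0∞ :=
  ⨅ γ : {γ : ℝ → α // ContinuousOn γ (Set.Icc 0 1) ∧ γ 0 = x ∧ γ 1 = y ∧
      ∀ t ∈ Set.Icc (0 : ℝ) 1, γ t ∈ S},
    pathELength d γ.1 0 1

/-- Hyperbolic convexity in the upper half-space model. -/
def uConvex (C : Set (ℂ × ℝ)) : Prop := ∀ x ∈ C, ∀ y ∈ C, uSeg x y ⊆ C

/-- The geodesic line with ideal endpoints `ξ` and `η`. -/
def uLine (ξ η : OnePoint ℂ) : Set (ℂ × ℝ) :=
  {p | ∃ γ : ℝ → ℂ × ℝ, (∀ s t, uDist (γ s) (γ t) = |s - t|) ∧ p ∈ Set.range γ ∧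
    convToBdry (fun n : ℕ => γ n) η ∧ convToBdry (fun n : ℕ => γ (-(n : ℝ))) ξ}

/-- The hyperbolic convex hull of the limit set of `G`. -/
def uHull (G : Set SL2C) : Set (ℂ × ℝ) :=
  ⋂₀ {C | uConvex C ∧ (⋃ ξ ∈ limitSetU G, ⋃ η ∈ limitSetU G, uLine ξ η) ⊆ C}

/-- A horoball in the upper half-space model. -/
def UHoroball (H : Set (ℂ × ℝ)) : Prop :=
  (∃ t₀ : ℝ, 0 < t₀ ∧ H = {p | t₀ ≤ p.2}) ∨
  (∃ z : ℂ, ∃ r : ℝ, 0 < r ∧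
    H = {p | 0 < p.2 ∧ Complex.normSq (p.1 - z) + (p.2 - r) ^ 2 ≤ r ^ 2})

/-- An equidistant tube or horoball ("thin part") in the upper half-space model. -/
def UThin (T : Set (ℂ × ℝ)) : Prop :=
  UHoroball T ∨ ∃ γ : ℝ → ℂ × ℝ, (∀ s t, uDist (γ s) (γ t) = |s - t|) ∧
    ∃ R : ℝ, 0 < R ∧ T = {p | 0 < p.2 ∧ sInf ((uDist p) '' Set.range γ) ≤ R}

/-- Geometric finiteness of a subgroup of `SL(2,ℂ)` (upper half-space model):
discreteness together with an invariant family of disjoint horoballs whose complement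
in the convex core is cobounded for the orbit of the base point. -/
def GeomFiniteU (G : Subgroup SL2C) : Prop :=
  DiscreteSG G ∧ ∃ 𝓗 : Set (Set (ℂ × ℝ)),
    (∀ H ∈ 𝓗, UHoroball H) ∧
    (∀ H ∈ 𝓗, ∀ H' ∈ 𝓗, H ≠ H' → Disjoint H H') ∧
    (∀ g ∈ G, ∀ H ∈ 𝓗, (uAct g) '' H ∈ 𝓗) ∧
    ∃ D : ℝ, ∀ x ∈ uHull (G : Set SL2C) \ ⋃₀ 𝓗, ∃ g ∈ G, uDist x (uAct g uO) ≤ D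

/-- The Cannon–Thurston map for a weakly type preserving isomorphism `ρ` defined on the
Kleinian group `Γ0`: a continuous map of limit sets, equivariant, compatible with
convergence of orbit points to the boundary. -/
def IsCTMap (Γ0 : Subgroup SL2C) (ρ : ↥Γ0 →* SL2C)
    (F : OnePoint ℂ → OnePoint ℂ) : Prop :=
  ContinuousOn F (limitSetU (Γ0 : Set SL2C)) ∧
  Set.MapsTo F (limitSetU (Γ0 : Set SL2C)) (limitSetU (Set.range fun g => ρ g)) ∧
  (∀ g : ↥Γ0, ∀ ξ ∈ limitSetU (Γ0 : Set SL2C),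
    F (mobius g.1 ξ) = mobius (ρ g) (F ξ)) ∧
  (∀ ξ ∈ limitSetU (Γ0 : Set SL2C), ∀ u : ℕ → ↥Γ0,
    convToBdry (fun n => uAct (u n).1 uO) ξ →
    convToBdry (fun n => uAct (ρ (u n)) uO) (F ξ))

/-- The UEP ("uniform embedding of points") condition for a sequence of
representations. -/
def UEP (Γ0 : Subgroup SL2C) (S : Set ↥Γ0) (ρ : ℕ → (↥Γ0 →* SL2C)) : Prop :=
  ∃ f : ℕ → ℕ, Tendsto f atTop atTop ∧
    ∀ (N : ℕ) (g : ↥Γ0) (n : ℕ), N ≤ wordLength S g →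
      (f N : ℝ) ≤ uDist uO (uAct (ρ n g) uO)

/-- The UEPP ("uniform embedding of pairs of points") condition: hyperbolic geodesics
joining the images of the endpoints of Cayley-graph geodesic segments lying outside
large balls lie uniformly far from the base point. -/
def UEPP (Γ0 : Subgroup SL2C) (S : Set ↥Γ0) (ρ : ℕ → (↥Γ0 →* SL2C)) : Prop :=
  ∃ f₁ : ℕ → ℕ, Tendsto f₁ atTop atTop ∧
    ∀ (N n k : ℕ) (γ : ℕ → ↥Γ0),
      (∀ i ≤ k, ∀ j ≤ k, wordLength S ((γ i)⁻¹ * γ j) = Nat.dist i j) →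
      (∀ i ≤ k, N ≤ wordLength S (γ i)) →
      ∀ z ∈ uSeg (uAct (ρ n (γ 0)) uO) (uAct (ρ n (γ k)) uO),
        (f₁ N : ℝ) ≤ uDist uO z

/-!
The Frobenius norm of `M ∈ SL(2,ℂ)` satisfies `‖M‖² = 2 cosh d(O, M·O)`, so bounded
displacement of the base point is the same as boundedness in `SL(2,ℂ)`.

UEP ⇒ strong convergence: a convergent sequence `ρ_{φ n}(g n)` displaces `O` boundedly, so by
UEP the `g n` have bounded word length; they range over a finite ball of `Γ`, and the limit is
`ρ_∞` of one of them.

Strong convergence ⇒ UEP: suppose elements `g` of arbitrarily large word length had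
`d(O, ρ_n(g)·O) < R`. If infinitely many of them belong to one `ρ_n`, the discrete faithful
`ρ_n` has infinitely many elements in a compact set, which is absurd. Otherwise `n → ∞` along a
convergent subsequence, whose limit is some `ρ_∞(h₀)`; then `ρ_n(h₀⁻¹ g) → 1` with
`ρ_n(h₀⁻¹ g) ≠ 1`. Since `SL(2,ℂ)` has no small subgroups, powers of these elements approach
every sphere of small radius about `1`, so the geometric limit `ρ_∞(Γ)` would contain a
continuum, although `Γ` is countable.
-/

open scoped Matrix.Norms.Frobenius Topology

lemma frequently_eq_or_tendsto_atTop (n : ℕ → ℕ) :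
    (∃ k, ∃ᶠ N in atTop, n N = k) ∨ Tendsto n atTop atTop := by
  refine or_iff_not_imp_right.2 fun h => ?_
  obtain ⟨b, hb⟩ : ∃ b, ∃ᶠ N in atTop, n N < b := by
    simpa [tendsto_atTop, Filter.not_eventually, Filter.frequently_atTop] using h
  obtain ⟨k, -, hk⟩ := ((Set.finite_Iio b).frequently_exists (p := fun k N => n N = k)).1
    (hb.mono fun N hN => ⟨n N, hN, rfl⟩)
  exact ⟨k, hk⟩

lemma exists_tendsto_atTop_forall_of_eventually {P : ℕ → ℕ → Prop} (h0 : ∀ N, P N 0)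
    (h : ∀ c, ∀ᶠ N in atTop, P N c) : ∃ f : ℕ → ℕ, Tendsto f atTop atTop ∧ ∀ N, P N (f N) := by
  refine ⟨fun N => Nat.findGreatest (P N) N, tendsto_atTop.2 fun c => ?_,
    fun N => Nat.findGreatest_spec (Nat.zero_le N) (h0 N)⟩
  filter_upwards [h c, eventually_ge_atTop c] with N hN hcN
  exact Nat.le_findGreatest hcN hN

section NormedRing

variable {A : Type*} [NormedRing A]

lemma norm_pow_succ_sub_one_le (a : A) (k : ℕ) :
    ‖a ^ (k + 1) - 1‖ ≤ ‖a ^ k - 1‖ + (‖a ^ k - 1‖ + ‖(1 : A)‖) * ‖a - 1‖ := by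
  have hsplit : a ^ (k + 1) - 1 = (a ^ k - 1) + a ^ k * (a - 1) := by rw [pow_succ]; noncomm_ring
  have hak : ‖a ^ k‖ ≤ ‖a ^ k - 1‖ + ‖(1 : A)‖ := norm_le_norm_sub_add _ _
  calc ‖a ^ (k + 1) - 1‖ ≤ ‖a ^ k - 1‖ + ‖a ^ k‖ * ‖a - 1‖ := by
        rw [hsplit]; exact (norm_add_le _ _).trans (add_le_add_right (norm_mul_le _ _) _)
    _ ≤ _ := by gcongr

variable [NormedSpace ℝ A]

lemma two_mul_norm_sub_one_sub_sq_le (b : A) :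
    2 * ‖b - 1‖ - ‖b - 1‖ ^ 2 ≤ ‖b * b - 1‖ := by
  have hsplit : b * b - 1 = (2 : ℝ) • (b - 1) + (b - 1) * (b - 1) := by
    rw [two_smul]; noncomm_ring
  have := norm_sub_norm_le ((2 : ℝ) • (b - 1)) (-((b - 1) * (b - 1)))
  rw [sub_neg_eq_add, ← hsplit, norm_neg, norm_smul, Real.norm_two] at this
  nlinarith [norm_mul_le (b - 1) (b - 1)]

lemma exists_quarter_lt_norm_pow_sub_one {a : A} (ha : a ≠ 1) :
    ∃ k : ℕ, 1 / 4 < ‖a ^ k - 1‖ := by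
  by_contra! hsmall
  set m : ℕ → ℝ := fun k => ‖a ^ 2 ^ k - 1‖
  have hm0 : 0 < m 0 := by simpa [m, sub_eq_zero] using ha
  have hstep : ∀ k, 7 / 4 * m k ≤ m (k + 1) := by
    intro k
    have hsq : a ^ 2 ^ (k + 1) = a ^ 2 ^ k * a ^ 2 ^ k := by rw [pow_succ, pow_mul, sq]
    have := two_mul_norm_sub_one_sub_sq_le (a ^ 2 ^ k)
    rw [← hsq] at this
    nlinarith [hsmall (2 ^ k), norm_nonneg (a ^ 2 ^ k - 1)]
  have hgrow : ∀ k, (7 / 4 : ℝ) ^ k * m 0 ≤ m k := by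
    intro k
    induction k with
    | zero => simp
    | succ k ih => rw [pow_succ']; nlinarith [hstep k]
  obtain ⟨k, hk⟩ := pow_unbounded_of_one_lt (1 / 4 / m 0) (by norm_num : (1 : ℝ) < 7 / 4)
  rw [div_lt_iff₀ hm0] at hk
  linarith [hgrow k, hsmall (2 ^ k)]

lemma exists_norm_pow_sub_one_mem_Icc {a : A} (ha : a ≠ 1) {s : ℝ} (hs0 : 0 < s)
    (hs : s < 1 / 4) :
    ∃ k : ℕ, s ≤ ‖a ^ k - 1‖ ∧ ‖a ^ k - 1‖ ≤ s + (s + ‖(1 : A)‖) * ‖a - 1‖ := by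
  have hex : ∃ k, s ≤ ‖a ^ k - 1‖ :=
    (exists_quarter_lt_norm_pow_sub_one ha).imp fun k hk => by linarith
  obtain ⟨k, hk⟩ : ∃ k, Nat.find hex = k + 1 :=
    Nat.exists_eq_succ_of_ne_zero fun h => by
      have := Nat.find_spec hex
      simp [h] at this
      linarith
  have hbefore : ‖a ^ k - 1‖ < s := not_le.1 (Nat.find_min hex (by omega))
  refine ⟨k + 1, hk ▸ Nat.find_spec hex, (norm_pow_succ_sub_one_le a k).trans ?_⟩
  gcongr

lemma exists_tendsto_norm_pow_sub_one {a : ℕ → A} (ha : Tendsto a atTop (𝓝 1))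
    (hne : ∀ᶠ j in atTop, a j ≠ 1) {s : ℝ} (hs0 : 0 < s) (hs : s < 1 / 4) :
    ∃ k : ℕ → ℕ, Tendsto (fun j => ‖a j ^ k j - 1‖) atTop (𝓝 s) := by
  have hwindow : ∀ j, ∃ k : ℕ, a j ≠ 1 →
      s ≤ ‖a j ^ k - 1‖ ∧ ‖a j ^ k - 1‖ ≤ s + (s + ‖(1 : A)‖) * ‖a j - 1‖ := fun j => by
    by_cases h : a j = 1
    · exact ⟨0, fun h' => (h' h).elim⟩
    · exact (exists_norm_pow_sub_one_mem_Icc h hs0 hs).imp fun _ hk _ => hk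
  choose k hk using hwindow
  refine ⟨k, tendsto_of_tendsto_of_tendsto_of_le_of_le' tendsto_const_nhds ?_
    (hne.mono fun j hj => (hk j hj).1) (hne.mono fun j hj => (hk j hj).2)⟩
  have h0 : Tendsto (fun j => ‖a j - 1‖) atTop (𝓝 0) := by
    simpa using (ha.sub_const 1).norm
  simpa using tendsto_const_nhds.add (tendsto_const_nhds.mul h0)

end NormedRing

section WordLength

variable {G : Type*} [Group G] {S : Set G}

lemma exists_list_length_eq_wordLength (hS : Subgroup.closure S = ⊤) (g : G) :
    ∃ l : List G, l.length = wordLength S g ∧ (∀ x ∈ l, x ∈ S ∨ x⁻¹ ∈ S) ∧ l.prod = g := by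
  have hg : g ∈ Submonoid.closure (S ∪ S⁻¹) := by
    rw [← Subgroup.closure_toSubmonoid, hS]; trivial
  obtain ⟨l, hl, hprod⟩ := Submonoid.exists_list_of_mem_closure hg
  exact Nat.sInf_mem (s := {n | ∃ l : List G, l.length = n ∧ (∀ x ∈ l, x ∈ S ∨ x⁻¹ ∈ S) ∧
    l.prod = g}) ⟨l.length, l, rfl, hl, hprod⟩

lemma finite_setOf_wordLength_le (hS : Subgroup.closure S = ⊤) (hSfin : S.Finite) (K : ℕ) :
    {g : G | wordLength S g ≤ K}.Finite := by
  set T := S ∪ S⁻¹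
  have : Finite T := (hSfin.union hSfin.inv).to_subtype
  refine ((List.finite_length_le T K).image fun l => (l.map (↑)).prod).subset fun g hg => ?_
  obtain ⟨l, hlen, hl, rfl⟩ := exists_list_length_eq_wordLength hS g
  lift l to List T using hl
  refine ⟨l, ?_, rfl⟩
  show l.length ≤ K
  rw [← List.length_map (f := Subtype.val), hlen]
  exact hg

lemma countable_of_finite_closure_eq_top (hS : Subgroup.closure S = ⊤) (hSfin : S.Finite) :
    Countable G := by
  refine Set.countable_univ_iff.1 (Set.Countable.mono (fun g _ => ?_)
    (Set.countable_iUnion fun K => (finite_setOf_wordLength_le hS hSfin K).countable))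
  exact Set.mem_iUnion.2 ⟨wordLength S g, le_refl (wordLength S g)⟩

end WordLength

lemma uDist_nonneg (p q : ℂ × ℝ) : 0 ≤ uDist p q :=
  mul_nonneg zero_le_two (Real.arsinh_nonneg_iff.2 (by positivity))

lemma cosh_uDist {p q : ℂ × ℝ} (hp : 0 < p.2) (hq : 0 < q.2) :
    Real.cosh (uDist p q) =
      1 + (Complex.normSq (p.1 - q.1) + (p.2 - q.2) ^ 2) / (2 * p.2 * q.2) := by
  have hW : 0 ≤ Complex.normSq (p.1 - q.1) + (p.2 - q.2) ^ 2 :=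
    add_nonneg (Complex.normSq_nonneg _) (sq_nonneg _)
  unfold uDist
  rw [Real.cosh_two_mul, Real.cosh_arsinh, Real.sinh_arsinh,
    Real.sq_sqrt (add_nonneg zero_le_one (sq_nonneg _)),
    div_pow, mul_pow, Real.sq_sqrt hW, Real.sq_sqrt (mul_pos hp hq).le]
  field_simp
  ring

lemma frobenius_norm_sq_fin_two (A : Matrix (Fin 2) (Fin 2) ℂ) :
    ‖A‖ ^ 2 = Complex.normSq (A 0 0) + Complex.normSq (A 0 1) + Complex.normSq (A 1 0) +
      Complex.normSq (A 1 1) := by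
  rw [Matrix.frobenius_norm_def, ← Real.sqrt_eq_rpow, Real.sq_sqrt (by positivity)]
  simp [Fin.sum_univ_two, Complex.sq_norm, add_assoc]

lemma norm_sq_eq_two_mul_cosh_uDist (M : SL2C) :
    ‖M.1‖ ^ 2 = 2 * Real.cosh (uDist uO (uAct M uO)) := by
  obtain ⟨A, hdet⟩ := M
  obtain ⟨a, b, c, d, rfl⟩ : ∃ a b c d, A = !![a, b; c, d] := ⟨_, _, _, _, A.eta_fin_two⟩
  have hdet' : a * d - b * c = 1 := by rwa [Matrix.det_fin_two_of] at hdet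
  have hD : 0 < Complex.normSq c + Complex.normSq d := by
    rcases eq_or_ne c 0 with rfl | hc
    · have : d ≠ 0 := by rintro rfl; simp at hdet'
      simpa using Complex.normSq_pos.2 this
    · exact add_pos_of_pos_of_nonneg (Complex.normSq_pos.2 hc) (Complex.normSq_nonneg d)
  have hlagrange : Complex.normSq (b * conj d + a * conj c) + 1 =
      (Complex.normSq a + Complex.normSq b) * (Complex.normSq c + Complex.normSq d) := by
    rw [← Complex.normSq_one, ← hdet']
    simp only [Complex.normSq_apply, Complex.add_re, Complex.add_im, Complex.mul_re,
      Complex.mul_im, Complex.conj_re, Complex.conj_im, Complex.sub_re, Complex.sub_im]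
    ring
  have hact : uAct ⟨!![a, b; c, d], hdet⟩ uO =
      ((b * conj d + a * conj c) / ((Complex.normSq c + Complex.normSq d : ℝ) : ℂ),
        1 / (Complex.normSq c + Complex.normSq d)) := by
    simp [uAct, uO, add_comm]
  rw [hact, cosh_uDist (by simp [uO]) (by simpa using hD), frobenius_norm_sq_fin_two]
  simp only [uO, zero_sub, Complex.normSq_neg, Complex.normSq_div, Complex.normSq_ofReal]
  field_simp
  simp only [Matrix.of_apply, Matrix.cons_val', Matrix.cons_val_zero, Matrix.cons_val_one,
    Matrix.cons_val_fin_one]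
  linear_combination -hlagrange

lemma uDist_uO_le_norm_sq (M : SL2C) : uDist uO (uAct M uO) ≤ ‖M.1‖ ^ 2 / 2 := by
  have h := Real.self_le_sinh_iff.2 (uDist_nonneg uO (uAct M uO))
  have := Real.sinh_lt_cosh (uDist uO (uAct M uO))
  rw [norm_sq_eq_two_mul_cosh_uDist]
  linarith

lemma norm_le_of_uDist_uO_le {M : SL2C} {R : ℝ} (h : uDist uO (uAct M uO) ≤ R) :
    ‖M.1‖ ≤ √(2 * Real.cosh R) := by
  have h0 := uDist_nonneg uO (uAct M uO)
  rw [← Real.sqrt_sq (norm_nonneg M.1), norm_sq_eq_two_mul_cosh_uDist]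
  gcongr
  rw [Real.cosh_le_cosh, abs_of_nonneg h0, abs_of_nonneg (h0.trans h)]
  exact h

lemma SL2C.exists_subseq_tendsto {u : ℕ → SL2C} {C : ℝ} (h : ∀ n, ‖(u n).1‖ ≤ C) :
    ∃ L : SL2C, ∃ ψ : ℕ → ℕ, StrictMono ψ ∧ Tendsto (fun j => (u (ψ j)).1) atTop (𝓝 L.1) := by
  obtain ⟨A, -, ψ, hψ, hA⟩ := tendsto_subseq_of_bounded (Metric.isBounded_closedBall (x := 0)
    (r := C)) (x := fun n => (u n).1) fun n => mem_closedBall_zero_iff.2 (h n)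
  have hdet : A.det = 1 :=
    tendsto_nhds_unique ((continuous_id.matrix_det.tendsto A).comp hA)
      (tendsto_const_nhds.congr fun n => (u (ψ n)).2.symm)
  exact ⟨⟨A, hdet⟩, ψ, hψ, hA⟩

lemma SL2C.exists_subseq_tendsto_of_uDist_le {u : ℕ → SL2C} {R : ℝ}
    (h : ∀ n, uDist uO (uAct (u n) uO) ≤ R) :
    ∃ L : SL2C, ∃ ψ : ℕ → ℕ, StrictMono ψ ∧ Tendsto (fun j => (u (ψ j)).1) atTop (𝓝 L.1) :=
  SL2C.exists_subseq_tendsto fun n => norm_le_of_uDist_uO_le (h n)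

lemma GeomLimitSet.mem_of_tendsto {Gn : ℕ → Set SL2C} {H : Set SL2C} (hG : GeomLimitSet Gn H)
    {m : ℕ → ℕ} (hm : Tendsto m atTop atTop) {u : ℕ → SL2C} (hu : ∀ j, u j ∈ Gn (m j))
    {L : SL2C} (hL : Tendsto (fun j => (u j).1) atTop (𝓝 L.1)) : L ∈ H := by
  obtain ⟨φ, hφ, hmφ⟩ := strictMono_subseq_of_tendsto_atTop hm
  exact hG.2 (m ∘ φ) hmφ (u ∘ φ) (fun j => hu (φ j)) L (hL.comp hφ.tendsto_atTop)

lemma GeomLimitSet.Ioo_subset_image_norm_sub_one {K : ℕ → Subgroup SL2C} {H : Set SL2C}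
    (hG : GeomLimitSet (fun n => K n) H) {m : ℕ → ℕ} (hm : Tendsto m atTop atTop)
    {a : ℕ → SL2C} (ha : ∀ j, a j ∈ K (m j)) (ha1 : Tendsto (fun j => (a j).1) atTop (𝓝 1))
    (hne : ∀ᶠ j in atTop, a j ≠ 1) :
    Ioo 0 (1 / 4) ⊆ (fun L : SL2C => ‖L.1 - 1‖) '' H := by
  rintro s ⟨hs0, hs⟩
  obtain ⟨k, hk⟩ := exists_tendsto_norm_pow_sub_one ha1
    (hne.mono fun j hj h => hj (Subtype.ext h)) hs0 hs
  obtain ⟨C, hC⟩ := hk.bddAbove_range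
  have hbdd : ∀ j, ‖(a j ^ k j).1‖ ≤ C + ‖(1 : Matrix (Fin 2) (Fin 2) ℂ)‖ := fun j => by
    rw [Matrix.SpecialLinearGroup.coe_pow]
    exact (norm_le_norm_sub_add _ _).trans (add_le_add_left (hC ⟨j, rfl⟩) _)
  obtain ⟨L, ψ, hψ, hL⟩ := SL2C.exists_subseq_tendsto hbdd
  refine ⟨L, hG.mem_of_tendsto (hm.comp hψ.tendsto_atTop) (fun j => pow_mem (ha (ψ j)) _) hL, ?_⟩
  refine tendsto_nhds_unique (hL.sub_const 1).norm ?_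
  simp only [Matrix.SpecialLinearGroup.coe_pow]
  exact hk.comp hψ.tendsto_atTop

section Representations

variable {Γ : Type*} [Group Γ] {ρ : ℕ → Γ →* SL2C} {ρlim : Γ →* SL2C}

lemma finite_setOf_uDist_le {σ : Γ →* SL2C} (hσ : Function.Injective σ)
    (hdisc : DiscreteSG σ.range) (R : ℝ) :
    {g : Γ | uDist uO (uAct (σ g) uO) ≤ R}.Finite := by
  by_contra hinf
  let e := Set.Infinite.natEmbedding _ hinf
  obtain ⟨L, ψ, hψ, hL⟩ :=
    SL2C.exists_subseq_tendsto_of_uDist_le (u := fun n => σ (e n)) fun n => (e n).2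
  obtain ⟨N, hN⟩ := hdisc _ (fun j => ⟨e (ψ j), rfl⟩) L hL
  have hsame : e (ψ N) = e (ψ (N + 1)) :=
    Subtype.ext (hσ ((hN N le_rfl).trans (hN (N + 1) N.le_succ).symm))
  exact (hψ N.lt_succ_self).ne (e.injective hsame)

lemma not_tendsto_of_geomLimitSet [Countable Γ] (hfaith : ∀ n, Function.Injective (ρ n))
    (halg : ∀ g, Tendsto (fun n => (ρ n g).1) atTop (𝓝 (ρlim g).1))
    (hGeom : GeomLimitSet (fun n => ((ρ n).range : Set SL2C)) (ρlim.range : Set SL2C))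
    {m : ℕ → ℕ} (hm : Tendsto m atTop atTop) {g : ℕ → Γ} (hg : ∀ h, ∀ᶠ j in atTop, g j ≠ h)
    (L : SL2C) : ¬Tendsto (fun j => (ρ (m j) (g j)).1) atTop (𝓝 L.1) := by
  intro hL
  obtain ⟨h₀, rfl⟩ := hGeom.mem_of_tendsto hm (fun j => ⟨g j, rfl⟩) hL
  have ha1 : Tendsto (fun j => (ρ (m j) (h₀⁻¹ * g j)).1) atTop (𝓝 1) := by
    have := ((halg h₀⁻¹).comp hm).mul hL
    rw [← Matrix.SpecialLinearGroup.coe_mul, ← map_mul, inv_mul_cancel, map_one,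
      Matrix.SpecialLinearGroup.coe_one] at this
    simpa only [map_mul, Matrix.SpecialLinearGroup.coe_mul, Function.comp_def] using this
  have hne : ∀ᶠ j in atTop, ρ (m j) (h₀⁻¹ * g j) ≠ 1 := (hg h₀).mono fun j hj h => by
    rw [← map_one (ρ (m j))] at h
    exact hj (inv_mul_eq_one.1 (hfaith _ h)).symm
  have hsub := hGeom.Ioo_subset_image_norm_sub_one (K := fun n => (ρ n).range) hm
    (fun j => ⟨_, rfl⟩) ha1 hne
  have := ((Set.countable_range ρlim).image _).mono hsub
  norm_num at this

end Representations

section Strong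

variable {Γ0 : Subgroup SL2C} {S : Set ↥Γ0} {ρ : ℕ → ↥Γ0 →* SL2C} {ρlim : ↥Γ0 →* SL2C}

lemma UEP.exists_wordLength_lt (h : UEP Γ0 S ρ) (B : ℝ) :
    ∃ N, ∀ g n, uDist uO (uAct (ρ n g) uO) ≤ B → wordLength S g < N := by
  obtain ⟨f, hf, hfd⟩ := h
  obtain ⟨N, hN⟩ := (hf.eventually_gt_atTop ⌈B⌉₊).exists
  refine ⟨N, fun g n hB => not_le.1 fun hNg => ?_⟩
  linarith [hfd N g n hNg, Nat.lt_of_ceil_lt hN]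

lemma geomLimitSet_of_UEP (hgen : Subgroup.closure S = ⊤) (hSfin : S.Finite)
    (halg : ∀ g, Tendsto (fun n => (ρ n g).1) atTop (𝓝 (ρlim g).1)) (hUEP : UEP Γ0 S ρ) :
    GeomLimitSet (fun n => ((ρ n).range : Set SL2C)) (ρlim.range : Set SL2C) := by
  refine ⟨fun _ ⟨g, hg⟩ => ⟨fun n => ρ n g, fun n => ⟨g, rfl⟩, hg ▸ halg g⟩,
    fun φ hφ u hu L hL => ?_⟩
  choose g hg using hu
  obtain ⟨C, hC⟩ := hL.norm.bddAbove_range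
  obtain ⟨N, hN⟩ := hUEP.exists_wordLength_lt (C ^ 2 / 2)
  have hball : ∀ n, g n ∈ {x | wordLength S x ≤ N} := fun n => by
    refine (hN _ (φ n) ((uDist_uO_le_norm_sq _).trans ?_)).le
    rw [hg n]
    gcongr
    exact hC ⟨n, rfl⟩
  obtain ⟨x, -, hx⟩ := ((finite_setOf_wordLength_le hgen hSfin N).frequently_exists
    (l := atTop) (p := fun x n => g n = x)).1
      (Frequently.of_forall fun n => ⟨g n, hball n, rfl⟩)
  obtain ⟨ψ, hψ, hgψ⟩ := extraction_of_frequently_atTop hx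
  have hlim : Tendsto (fun j => (u (ψ j)).1) atTop (𝓝 (ρlim x).1) := by
    simp only [← hg, hgψ]
    exact (halg x).comp (hφ.comp hψ).tendsto_atTop
  exact ⟨x, Subtype.ext (tendsto_nhds_unique hlim (hL.comp hψ.tendsto_atTop))⟩

lemma exists_wordLength_forall_le_uDist (hgen : Subgroup.closure S = ⊤) (hSfin : S.Finite)
    (hfaith : ∀ n, Function.Injective (ρ n)) (hdisc : ∀ n, DiscreteSG (ρ n).range)
    (halg : ∀ g, Tendsto (fun n => (ρ n g).1) atTop (𝓝 (ρlim g).1))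
    (hGeom : GeomLimitSet (fun n => ((ρ n).range : Set SL2C)) (ρlim.range : Set SL2C)) (R : ℝ) :
    ∃ N, ∀ g n, N ≤ wordLength S g → R ≤ uDist uO (uAct (ρ n g) uO) := by
  by_contra! hcon
  choose g n hgN hgR using hcon
  rcases frequently_eq_or_tendsto_atTop n with ⟨n₀, hn₀⟩ | hn
  · obtain ⟨K, hK⟩ :=
      ((finite_setOf_uDist_le (hfaith n₀) (hdisc n₀) R).image (wordLength S)).bddAbove
    obtain ⟨N, hN, hKN⟩ := (hn₀.and_eventually (eventually_gt_atTop K)).exists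
    have : wordLength S (g N) ≤ K := hK ⟨g N, by simpa [← hN] using (hgR N).le, rfl⟩
    linarith [hgN N]
  · have := countable_of_finite_closure_eq_top hgen hSfin
    obtain ⟨L, ψ, hψ, hL⟩ := SL2C.exists_subseq_tendsto_of_uDist_le fun N => (hgR N).le
    refine not_tendsto_of_geomLimitSet hfaith halg hGeom (hn.comp hψ.tendsto_atTop)
      (g := g ∘ ψ) (fun h => ?_) L hL
    filter_upwards [eventually_gt_atTop (wordLength S h)] with j hj hgh
    have hj' : j ≤ wordLength S (g (ψ j)) := hψ.le_apply.trans (hgN (ψ j))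
    rw [Function.comp_apply] at hgh
    rw [hgh] at hj'
    omega

lemma UEP_of_geomLimitSet (hgen : Subgroup.closure S = ⊤) (hSfin : S.Finite)
    (hfaith : ∀ n, Function.Injective (ρ n)) (hdisc : ∀ n, DiscreteSG (ρ n).range)
    (halg : ∀ g, Tendsto (fun n => (ρ n g).1) atTop (𝓝 (ρlim g).1))
    (hGeom : GeomLimitSet (fun n => ((ρ n).range : Set SL2C)) (ρlim.range : Set SL2C)) :
    UEP Γ0 S ρ := by
  obtain ⟨f, hf, hfP⟩ := exists_tendsto_atTop_forall_of_eventually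
    (P := fun N c => ∀ g n, N ≤ wordLength S g → (c : ℝ) ≤ uDist uO (uAct (ρ n g) uO))
    (fun N g n _ => by simpa using uDist_nonneg _ _) fun c => by
      obtain ⟨N₀, hN₀⟩ := exists_wordLength_forall_le_uDist hgen hSfin hfaith hdisc halg hGeom c
      exact eventually_atTop.2 ⟨N₀, fun N hN g n hg => hN₀ g n (hN.trans hg)⟩
  exact ⟨f, hf, fun N g n => hfP N g n⟩

end Strong

theorem stmt12_general (Γ0 : Subgroup SL2C)
    (S : Set ↥Γ0) (hSfin : S.Finite) (hgen : Subgroup.closure S = ⊤)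
    (ρ : ℕ → (↥Γ0 →* SL2C)) (ρlim : ↥Γ0 →* SL2C)
    (hfaith : ∀ n, Function.Injective (ρ n))
    (hdisc : ∀ n, DiscreteSG (ρ n).range)
    (halg : ∀ g : ↥Γ0, Tendsto (fun n => ((ρ n g : SL2C) : Matrix (Fin 2) (Fin 2) ℂ))
      atTop (nhds ((ρlim g : SL2C) : Matrix (Fin 2) (Fin 2) ℂ))) :
    GeomLimitSet (fun n => ((ρ n).range : Set SL2C)) ((ρlim).range : Set SL2C) ↔
      UEP Γ0 S ρ :=
  ⟨UEP_of_geomLimitSet hgen hSfin hfaith hdisc halg, geomLimitSet_of_UEP hgen hSfin halg⟩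

/-- A sequence of discrete faithful weakly type preserving
representations of a finitely generated Kleinian group `Γ0` converging algebraically to
`ρlim` converges strongly (i.e. the groups `ρₙ(Γ0)` converge geometrically to `ρlim(Γ0)`)
if and only if it satisfies UEP. -/
theorem stmt12 (Γ0 : Subgroup SL2C) (hΓdisc : DiscreteSG Γ0)
    (S : Set ↥Γ0) (hSfin : S.Finite) (hgen : Subgroup.closure S = ⊤)
    (ρ : ℕ → (↥Γ0 →* SL2C)) (ρlim : ↥Γ0 →* SL2C)
    (hfaith : ∀ n, Function.Injective (ρ n))
    (hdisc : ∀ n, DiscreteSG (ρ n).range)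
    (hwtp : ∀ n, ∀ g : ↥Γ0, IsParabolicSL g.1 → IsParabolicSL (ρ n g))
    (halg : ∀ g : ↥Γ0, Tendsto (fun n => ((ρ n g : SL2C) : Matrix (Fin 2) (Fin 2) ℂ))
      atTop (nhds ((ρlim g : SL2C) : Matrix (Fin 2) (Fin 2) ℂ))) :
    GeomLimitSet (fun n => ((ρ n).range : Set SL2C)) ((ρlim).range : Set SL2C) ↔
      UEP Γ0 S ρ :=
  stmt12_general Γ0 S hSfin hgen ρ ρlim hfaith hdisc halg

end
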